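/- The linear map Υ : ⨁_{n∈ℕ} (Vₙ* ⊗ Vₙ) → ℂ[SL(2,ℂ)] determined on each summand by φ ⊗ v ↦ (x ↦ φ(ρₙ(x)v)) is a linear bijection onto ℂ[SL(2,ℂ)]. Moreover Υ is SL(2,ℂ)-equivariant: for all g ∈ SL(2,ℂ), φ ∈ Vₙ*, v ∈ Vₙ and x ∈ SL(2,ℂ), Υ((φ∘ρₙ(g)⁻¹) ⊗ ρₙ(g)v)(x) = Υ(φ ⊗ v)(g⁻¹ x g). -/

import Mathlib

open Matrix Finset TensorProduct DirectSum

noncomputable section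

abbrev SL2 : Type := Matrix.SpecialLinearGroup (Fin 2) ℂ

/-- A function `f : SL(2,ℂ) → ℂ` is regular if it is given by a polynomial
in the four matrix entries. -/
def IsRegularFn (f : SL2 → ℂ) : Prop :=
  ∃ P : MvPolynomial (Fin 4) ℂ,
    ∀ A : SL2, f A = MvPolynomial.eval ![A.1 0 0, A.1 0 1, A.1 1 0, A.1 1 1] P

/-- Matrix entry of the representation ρₙ on Vₙ in the basis `n_k = X^k Y^{n-k}`:
`rhoFun n g l k` is the coefficient of `X^l Y^{n-l}` in
`(g₁₁ X + g₂₁ Y)^k (g₁₂ X + g₂₂ Y)^{n-k}`. -/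
def rhoFun (n : ℕ) (g : SL2) (l k : ℕ) : ℂ :=
  MvPolynomial.coeff (Finsupp.single (0 : Fin 2) l + Finsupp.single (1 : Fin 2) (n - l))
    (MvPolynomial.aeval
      ![MvPolynomial.C (g.1 0 0) * MvPolynomial.X (0 : Fin 2) +
          MvPolynomial.C (g.1 1 0) * MvPolynomial.X 1,
        MvPolynomial.C (g.1 0 1) * MvPolynomial.X 0 +
          MvPolynomial.C (g.1 1 1) * MvPolynomial.X 1]
      ((MvPolynomial.X (0 : Fin 2) : MvPolynomial (Fin 2) ℂ) ^ k * MvPolynomial.X 1 ^ (n - k)))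

/-- The matrix of ρₙ(g) acting on coordinates with respect to the basis `n_k`. -/
def rhoMat (n : ℕ) (g : SL2) : Matrix (Fin (n+1)) (Fin (n+1)) ℂ :=
  Matrix.of fun l k => rhoFun n g (l : ℕ) (k : ℕ)

/-- The bilinear map `(φ, v) ↦ (x ↦ φ(ρₙ(x)v))` from `Vₙ* × Vₙ` to functions on SL(2,ℂ). -/
def UpsilonAux (n : ℕ) :
    ((Fin (n+1) → ℂ) →ₗ[ℂ] ℂ) →ₗ[ℂ] ((Fin (n+1) → ℂ) →ₗ[ℂ] (SL2 → ℂ)) where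
  toFun φ :=
    { toFun := fun v => fun x : SL2 => φ ((rhoMat n x).mulVec v)
      map_add' := fun v w => funext fun x => by simp [Matrix.mulVec_add]
      map_smul' := fun c v => funext fun x => by simp [Matrix.mulVec_smul] }
  map_add' φ ψ := LinearMap.ext fun v => funext fun x => by simp
  map_smul' c φ := LinearMap.ext fun v => funext fun x => by simp

/-- The map `Υ : ⨁ₙ Vₙ* ⊗ Vₙ → (SL(2,ℂ) → ℂ)` given on each summand by
`φ ⊗ v ↦ (x ↦ φ(ρₙ(x)v))`. -/
def Upsilon : (⨁ n : ℕ, (((Fin (n+1) → ℂ) →ₗ[ℂ] ℂ) ⊗[ℂ] (Fin (n+1) → ℂ))) →ₗ[ℂ] (SL2 → ℂ) :=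
  DirectSum.toModule ℂ ℕ (SL2 → ℂ) fun n => TensorProduct.lift (UpsilonAux n)

/-!
`ρₙ(g)` is the matrix, on forms of degree `n`, of the substitution
`σ_g : X ↦ g₁₁ X + g₂₁ Y, Y ↦ g₁₂ X + g₂₂ Y` of `ℂ[X, Y]`. Since `σ_{xy} = σ_x ∘ σ_y`, each `ρₙ`
is multiplicative, which gives the equivariance, and `Υ(z)(x) = tr (M_z ρₙ(x))` where `M_z` is the
matrix of the endomorphism attached to `z ∈ Vₙ* ⊗ Vₙ`.

Expanding the binomials gives
`ρₙ(x)ₗₖ = ∑ᵢ C(k,i) C(n-k,l-i) x₁₁^i x₁₂^(l-i) x₂₁^(k-i) x₂₂^(n-k-l+i)`, so matrix coefficients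
are regular. Conversely, `x₁₂ x₂₁ = x₁₁ x₂₂ - 1` lets a monomial `x₁₁^p x₁₂^q x₂₁^r x₂₂^s` trade
`x₁₂ x₂₁` for `x₁₁ x₂₂` modulo lower degree; when `q = 0` or `r = 0` every term of
`ρₙ(x)_{p+q,p+r}` (`n = p+q+r+s`) is thereby a multiple of that monomial, the multiples adding up
to `C(n, p+q) ≠ 0`. Induction on the degree puts every monomial in the range of `Υ`.

For injectivity, let `∑ₙ tr (Eₙ ρₙ(x))` vanish on `SL(2,ℂ)`, `N` the largest index. At
`x = U(u) D(t) L(v)` (unipotent upper, diagonal, unipotent lower), `t ^ N` times the sum is a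
polynomial in `t` whose constant term is `(ρ_N(L(v)) E_N ρ_N(U(u)))₀₀ = ∑ₗₖ C(N,k) (E_N)ₗₖ v^l u^k`;
it vanishes for all `u, v`, so `E_N = 0`.
-/

open MvPolynomial

def expXY (n m : ℕ) : Fin 2 →₀ ℕ := Finsupp.single 0 m + Finsupp.single 1 (n - m)

@[simp] lemma expXY_apply_zero (n m : ℕ) : expXY n m 0 = m := by simp [expXY]

@[simp] lemma expXY_apply_one (n m : ℕ) : expXY n m 1 = n - m := by simp [expXY]

lemma expXY_injective (n : ℕ) : Function.Injective (expXY n) := fun l k h => by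
  simpa using congrArg (· 0) h

lemma degree_eq_apply_zero_add_apply_one (d : Fin 2 →₀ ℕ) : d.degree = d 0 + d 1 := by
  simp [Finsupp.degree_eq_weight_one, Finsupp.weight_apply, Finsupp.sum_fintype]

lemma monomial_expXY {R : Type*} [CommSemiring R] (n m : ℕ) (c : R) :
    monomial (expXY n m) c = C c * (X 0 ^ m * X 1 ^ (n - m)) := by
  rw [monomial_eq, Finsupp.prod_fintype _ _ fun _ => pow_zero _, Fin.prod_univ_two,
    expXY_apply_zero, expXY_apply_one]

lemma MvPolynomial.IsHomogeneous.eq_sum_expXY {R : Type*} [CommSemiring R]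
    {p : MvPolynomial (Fin 2) R} {n : ℕ} (hp : p.IsHomogeneous n) :
    p = ∑ m : Fin (n+1), monomial (expXY n m) (coeff (expXY n m) p) := by
  ext d
  simp only [coeff_sum, coeff_monomial]
  by_cases hd : d.degree = n
  · have hd0 : d 0 < n + 1 := by rw [degree_eq_apply_zero_add_apply_one] at hd; omega
    have hexp : expXY n (d 0) = d := by
      ext i; fin_cases i <;> simp [← hd, degree_eq_apply_zero_add_apply_one]
    rw [Finset.sum_eq_single ⟨d 0, hd0⟩ (fun m _ hm => if_neg fun h => hm (Fin.ext <| by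
      simpa using congrArg (· 0) h)) (by simp), if_pos hexp, hexp]
  · rw [hp.coeff_eq_zero hd]
    refine (Finset.sum_eq_zero fun m _ => if_neg ?_).symm
    rintro rfl
    exact hd (by rw [degree_eq_apply_zero_add_apply_one]; simp; omega)

def substXY {R : Type*} [CommRing R] (A : Matrix (Fin 2) (Fin 2) R) :
    MvPolynomial (Fin 2) R →ₐ[R] MvPolynomial (Fin 2) R :=
  aeval ![C (A 0 0) * X 0 + C (A 1 0) * X 1, C (A 0 1) * X 0 + C (A 1 1) * X 1]

section substXY

variable {R : Type*} [CommRing R]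

lemma substXY_mul (A B : Matrix (Fin 2) (Fin 2) R) :
    substXY (A * B) = (substXY A).comp (substXY B) := by
  apply MvPolynomial.algHom_ext
  intro i
  fin_cases i <;>
    simp only [substXY, Matrix.mul_apply, Fin.sum_univ_two, aeval_eq_bind₁,
      Fin.zero_eta, Fin.mk_one, bind₁_X_right, cons_val_zero, cons_val_one, cons_val_fin_one,
      AlgHom.coe_comp, Function.comp_apply, map_add, map_mul, algHom_C, algebraMap_eq] <;>
    ring

lemma substXY_one : substXY (1 : Matrix (Fin 2) (Fin 2) R) = AlgHom.id R _ := by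
  apply MvPolynomial.algHom_ext
  intro i
  fin_cases i <;> simp [substXY]

lemma isHomogeneous_substXY {p : MvPolynomial (Fin 2) R} {n : ℕ}
    (hp : p.IsHomogeneous n) (A : Matrix (Fin 2) (Fin 2) R) : (substXY A p).IsHomogeneous n := by
  have hX : ∀ i, (![C (A 0 0) * X 0 + C (A 1 0) * X 1, C (A 0 1) * X 0 + C (A 1 1) * X 1] i :
      MvPolynomial (Fin 2) R).IsHomogeneous 1 := fun i => by
    fin_cases i <;> exact (isHomogeneous_C_mul_X _ _).add (isHomogeneous_C_mul_X _ _)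
  simpa only [one_mul, substXY] using hp.aeval _ hX

end substXY

lemma isHomogeneous_X_pow_mul_X_pow {R : Type*} [CommSemiring R] {n k : ℕ} (hk : k ≤ n) :
    (X 0 ^ k * X 1 ^ (n - k) : MvPolynomial (Fin 2) R).IsHomogeneous n := by
  simpa [Nat.add_sub_cancel' hk] using
    (isHomogeneous_X_pow (R := R) (0 : Fin 2) k).mul (isHomogeneous_X_pow (1 : Fin 2) (n - k))

lemma rhoFun_eq_coeff_substXY (n : ℕ) (g : SL2) (l k : ℕ) :
    rhoFun n g l k = coeff (expXY n l) (substXY g.1 (X 0 ^ k * X 1 ^ (n - k))) := rfl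

lemma substXY_X_pow_mul_X_pow (n : ℕ) (g : SL2) (k : Fin (n+1)) :
    substXY g.1 (X 0 ^ (k : ℕ) * X 1 ^ (n - k)) =
      ∑ m : Fin (n+1), C (rhoMat n g m k) * (X 0 ^ (m : ℕ) * X 1 ^ (n - m)) := by
  have hk := isHomogeneous_X_pow_mul_X_pow (R := ℂ) (Nat.lt_succ_iff.1 k.2)
  rw [(isHomogeneous_substXY hk g.1).eq_sum_expXY]
  simp only [monomial_expXY]
  rfl

lemma rhoMat_mul (n : ℕ) (x y : SL2) : rhoMat n (x * y) = rhoMat n x * rhoMat n y := by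
  ext l k
  simp only [Matrix.mul_apply]
  change coeff (expXY n l) (substXY (x.1 * y.1) (X 0 ^ (k : ℕ) * X 1 ^ (n - k))) = _
  rw [substXY_mul, AlgHom.comp_apply, substXY_X_pow_mul_X_pow, map_sum, coeff_sum]
  refine Finset.sum_congr rfl fun m _ => ?_
  rw [map_mul, algHom_C, algebraMap_eq, coeff_C_mul, ← rhoFun_eq_coeff_substXY, mul_comm]
  rfl

lemma rhoMat_one (n : ℕ) : rhoMat n 1 = 1 := by
  ext l k
  change coeff (expXY n l) (substXY 1 (X 0 ^ (k : ℕ) * X 1 ^ (n - k))) = _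
  rw [substXY_one, AlgHom.id_apply, ← one_mul (X 0 ^ _ * _), ← C_1, ← monomial_expXY,
    coeff_monomial, Matrix.one_apply]
  simp only [(expXY_injective n).eq_iff, Fin.val_inj, eq_comm]

lemma rhoMat_inv (n : ℕ) (g : SL2) : (rhoMat n g)⁻¹ = rhoMat n g⁻¹ :=
  Matrix.inv_eq_right_inv (by rw [← rhoMat_mul, mul_inv_cancel, rhoMat_one])

abbrev tensorSummand (n : ℕ) : Type := ((Fin (n+1) → ℂ) →ₗ[ℂ] ℂ) ⊗[ℂ] (Fin (n+1) → ℂ)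

lemma Upsilon_of_tmul (n : ℕ) (φ : (Fin (n+1) → ℂ) →ₗ[ℂ] ℂ) (v : Fin (n+1) → ℂ) (x : SL2) :
    Upsilon (of tensorSummand n (φ ⊗ₜ v)) x = φ (rhoMat n x *ᵥ v) := by
  rw [Upsilon, ← lof_eq_of ℂ, toModule_lof]
  rfl

lemma Upsilon_equivariant (n : ℕ) (g : SL2) (φ : (Fin (n+1) → ℂ) →ₗ[ℂ] ℂ) (v : Fin (n+1) → ℂ)
    (x : SL2) :
    Upsilon (of tensorSummand n ((φ ∘ₗ mulVecLin (rhoMat n g)⁻¹) ⊗ₜ (rhoMat n g *ᵥ v))) x =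
      Upsilon (of tensorSummand n (φ ⊗ₜ v)) (g⁻¹ * x * g) := by
  rw [Upsilon_of_tmul, Upsilon_of_tmul, LinearMap.comp_apply, mulVecLin_apply, mulVec_mulVec,
    mulVec_mulVec, rhoMat_inv, ← rhoMat_mul, ← rhoMat_mul]

def tensorMatrix (n : ℕ) : tensorSummand n →ₗ[ℂ] Matrix (Fin (n+1)) (Fin (n+1)) ℂ :=
  LinearMap.toMatrix'.toLinearMap ∘ₗ dualTensorHom ℂ (Fin (n+1) → ℂ) (Fin (n+1) → ℂ)

lemma tensorMatrix_injective (n : ℕ) : Function.Injective (tensorMatrix n) :=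
  LinearMap.toMatrix'.injective.comp dualTensorHom_bijective.1

lemma Upsilon_of_apply (n : ℕ) (z : tensorSummand n) (x : SL2) :
    Upsilon (of tensorSummand n z) x = trace (tensorMatrix n z * rhoMat n x) := by
  induction z using TensorProduct.induction_on with
  | zero => simp
  | add z w hz hw => simp [hz, hw, Matrix.add_mul]
  | tmul φ v =>
    have hcomp : dualTensorHom ℂ _ _ (φ ⊗ₜ v) ∘ₗ toLin' (rhoMat n x) =
        dualTensorHom ℂ _ _ ((φ ∘ₗ toLin' (rhoMat n x)) ⊗ₜ v) := by
      ext; simp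
    rw [Upsilon_of_tmul, tensorMatrix, LinearMap.comp_apply, LinearEquiv.coe_coe,
      ← LinearMap.toMatrix'_toLin' (rhoMat n x), ← LinearMap.toMatrix'_comp,
      ← Matrix.trace_toLin'_eq, Matrix.toLin'_toMatrix', hcomp, LinearMap.trace_eq_contract_apply,
      contractLeft_apply, LinearMap.comp_apply, toLin'_apply, LinearMap.toMatrix'_toLin']

lemma Polynomial.coeff_C_mul_X_add_C_pow {R : Type*} [CommSemiring R] (a b : R) (k i : ℕ) :
    ((Polynomial.C a * Polynomial.X + Polynomial.C b) ^ k).coeff i =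
      k.choose i * a ^ i * b ^ (k - i) := by
  rw [add_pow, Polynomial.finsetSum_coeff]
  simp only [mul_pow, ← Polynomial.C_pow, ← Polynomial.C_eq_natCast, mul_assoc,
    mul_left_comm _ (Polynomial.X ^ _), Polynomial.coeff_X_pow_mul', ← Polynomial.C_mul,
    Polynomial.coeff_C]
  rw [Finset.sum_eq_single i (fun x _ hx => by split_ifs <;> first | rfl | omega) fun hi => by
    simp [Nat.choose_eq_zero_of_lt (by simpa using hi : k < i)]]
  simp only [le_refl, Nat.sub_self, if_true]
  ring

lemma coeff_expXY_eq_coeff_aeval {R : Type*} [CommRing R] {p : MvPolynomial (Fin 2) R}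
    {n l : ℕ} (hp : p.IsHomogeneous n) (hl : l ≤ n) :
    coeff (expXY n l) p = (aeval ![Polynomial.X, 1] p).coeff l := by
  conv_rhs => rw [hp.eq_sum_expXY]
  simp only [map_sum, aeval_monomial, Polynomial.algebraMap_eq, Finsupp.prod_pow,
    Fin.prod_univ_two, cons_val_zero, cons_val_one, cons_val_fin_one, expXY_apply_zero,
    expXY_apply_one, one_pow, mul_one, Polynomial.finsetSum_coeff, Polynomial.coeff_C_mul,
    Polynomial.coeff_X_pow, mul_ite, mul_zero]
  rw [Fin.sum_univ_eq_sum_range (fun m => if l = m then coeff (expXY n m) p else 0),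
    Finset.sum_ite_eq, if_pos (Finset.mem_range.2 (Nat.lt_succ_of_le hl))]

def entryMonomial (p q r s : ℕ) : SL2 → ℂ :=
  fun A => A.1 0 0 ^ p * A.1 0 1 ^ q * A.1 1 0 ^ r * A.1 1 1 ^ s

lemma rhoFun_eq_sum (g : SL2) {n l k : ℕ} (hl : l ≤ n) (hk : k ≤ n) :
    rhoFun n g l k = ∑ i ∈ range (l+1),
      (k.choose i * (n-k).choose (l-i) : ℂ) * entryMonomial i (l-i) (k-i) (n-k-(l-i)) g := by
  rw [rhoFun_eq_coeff_substXY,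
    coeff_expXY_eq_coeff_aeval (isHomogeneous_substXY (isHomogeneous_X_pow_mul_X_pow hk) g.1) hl]
  simp only [substXY, aeval_eq_bind₁, map_mul, map_pow, bind₁_X_right, cons_val_zero,
    cons_val_one, cons_val_fin_one, map_add, algHom_C, Polynomial.algebraMap_eq, aeval_X, mul_one,
    Polynomial.coeff_mul, Polynomial.coeff_C_mul_X_add_C_pow,
    Finset.Nat.sum_antidiagonal_eq_sum_range_succ_mk]
  refine Finset.sum_congr rfl fun i _ => ?_
  simp only [entryMonomial]
  ring

lemma rhoFun_zero_left (g : SL2) {n k : ℕ} (hk : k ≤ n) :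
    rhoFun n g 0 k = g.1 1 0 ^ k * g.1 1 1 ^ (n - k) := by
  simp [rhoFun_eq_sum g (Nat.zero_le n) hk, entryMonomial]

lemma rhoFun_zero_right (g : SL2) {n l : ℕ} (hl : l ≤ n) :
    rhoFun n g l 0 = n.choose l * g.1 0 1 ^ l * g.1 1 1 ^ (n - l) := by
  rw [rhoFun_eq_sum g hl (Nat.zero_le n), Finset.sum_eq_single 0 (fun i _ hi => by
    simp [Nat.choose_eq_zero_of_lt (Nat.pos_of_ne_zero hi)]) (by simp)]
  simp only [Nat.choose_self, Nat.cast_one, tsub_zero, one_mul, entryMonomial, pow_zero,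
    tsub_self, mul_one]
  ring

def lowerUnipotent (v : ℂ) : SL2 := ⟨!![1, 0; v, 1], by simp [det_fin_two_of]⟩

def upperUnipotent (u : ℂ) : SL2 := ⟨!![1, u; 0, 1], by simp [det_fin_two_of]⟩

def diagonalSL (t : ℂ) (ht : t ≠ 0) : SL2 := ⟨!![t, 0; 0, t⁻¹], by simp [det_fin_two_of, ht]⟩

lemma rhoMat_diagonalSL (n : ℕ) {t : ℂ} (ht : t ≠ 0) :
    rhoMat n (diagonalSL t ht) = diagonal fun m : Fin (n+1) => t ^ (m : ℕ) * t⁻¹ ^ (n - m) := by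
  ext l k
  rw [rhoMat, of_apply, rhoFun_eq_sum _ (Nat.lt_succ_iff.1 l.2) (Nat.lt_succ_iff.1 k.2)]
  have hD : ∀ p q r s, entryMonomial p q r s (diagonalSL t ht) = t ^ p * 0 ^ q * 0 ^ r * t⁻¹ ^ s :=
    fun _ _ _ _ => rfl
  simp only [hD]
  rcases eq_or_ne l k with rfl | hlk
  · rw [diagonal_apply_eq, Finset.sum_eq_single (l : ℕ) (fun i hi hil => by
      simp [zero_pow (Nat.sub_ne_zero_of_lt (lt_of_le_of_ne (Nat.lt_succ_iff.1
        (Finset.mem_range.1 hi)) hil))]) (by simp)]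
    simp
  · rw [diagonal_apply_ne _ hlk]
    refine Finset.sum_eq_zero fun i hi => ?_
    have hil := Nat.lt_succ_iff.1 (Finset.mem_range.1 hi)
    rcases lt_trichotomy i k with hik | rfl | hik
    · simp [zero_pow (Nat.sub_ne_zero_of_lt hik)]
    · simp [zero_pow (Nat.sub_ne_zero_of_lt (lt_of_le_of_ne hil (fun h => hlk (Fin.ext h.symm))))]
    · simp [Nat.choose_eq_zero_of_lt hik]

lemma eq_zero_of_forall_sum_mul_pow_eq_zero {R : Type*} [CommRing R] [IsDomain R] [Infinite R]
    {N : ℕ} (c : Fin N → R) (h : ∀ u : R, ∑ i, c i * u ^ (i : ℕ) = 0) : c = 0 := by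
  classical
  have hp : Polynomial.ofFn N c = 0 := Polynomial.funext fun u => by
    simpa [Polynomial.ofFn_eq_sum_monomial, Polynomial.eval_finsetSum] using h u
  exact Polynomial.injective_ofFn N (by rw [hp, map_zero])

lemma rhoMat_lower_mul_mul_upper_zero_zero (N : ℕ) (E : Matrix (Fin (N+1)) (Fin (N+1)) ℂ)
    (u v : ℂ) :
    (rhoMat N (lowerUnipotent v) * E * rhoMat N (upperUnipotent u)) 0 0 =
      ∑ l : Fin (N+1), (∑ k : Fin (N+1), (E l k * N.choose k) * u ^ (k : ℕ)) * v ^ (l : ℕ) := by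
  have hL : ∀ l : Fin (N+1), rhoMat N (lowerUnipotent v) 0 l = v ^ (l : ℕ) := fun l => by
    rw [rhoMat, of_apply, Fin.val_zero, rhoFun_zero_left _ (Nat.lt_succ_iff.1 l.2)]
    simp [lowerUnipotent]
  have hU : ∀ k : Fin (N+1), rhoMat N (upperUnipotent u) k 0 = N.choose k * u ^ (k : ℕ) :=
    fun k => by
      rw [rhoMat, of_apply, Fin.val_zero, rhoFun_zero_right _ (Nat.lt_succ_iff.1 k.2)]
      simp [upperUnipotent]
  simp only [mul_apply, hL, hU, Finset.sum_mul]
  rw [Finset.sum_comm]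
  exact Finset.sum_congr rfl fun l _ => Finset.sum_congr rfl fun k _ => by ring

lemma trace_mul_rhoMat_upper_diagonal_lower {n : ℕ} (E : Matrix (Fin (n+1)) (Fin (n+1)) ℂ)
    (u v : ℂ) {t : ℂ} (ht : t ≠ 0) :
    trace (E * rhoMat n (upperUnipotent u * diagonalSL t ht * lowerUnipotent v)) =
      ∑ m : Fin (n+1), (rhoMat n (lowerUnipotent v) * E * rhoMat n (upperUnipotent u)) m m *
        (t ^ (m : ℕ) * t⁻¹ ^ (n - m)) := by
  rw [rhoMat_mul, rhoMat_mul, rhoMat_diagonalSL, ← Matrix.mul_assoc, ← Matrix.mul_assoc,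
    trace_mul_cycle, ← Matrix.mul_assoc]
  simp [trace, mul_diagonal]

lemma corner_eq_zero_of_sum_trace_mul_rhoMat_eq_zero {s : Finset ℕ}
    {E : (n : ℕ) → Matrix (Fin (n+1)) (Fin (n+1)) ℂ} {N : ℕ} (hN : N ∈ s) (hs : ∀ n ∈ s, n ≤ N)
    (h : ∀ x : SL2, ∑ n ∈ s, trace (E n * rhoMat n x) = 0) (u v : ℂ) :
    (rhoMat N (lowerUnipotent v) * E N * rhoMat N (upperUnipotent u)) 0 0 = 0 := by
  let P : Polynomial ℂ := ∑ n ∈ s, ∑ m : Fin (n+1),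
    Polynomial.C ((rhoMat n (lowerUnipotent v) * E n * rhoMat n (upperUnipotent u)) m m) *
      Polynomial.X ^ (N - n + 2 * m)
  have hroot : ∀ t ≠ 0, P.eval t = 0 := by
    intro t ht
    calc P.eval t = t ^ N * ∑ n ∈ s, trace (E n *
          rhoMat n (upperUnipotent u * diagonalSL t ht * lowerUnipotent v)) := by
          simp only [P, Polynomial.eval_finsetSum, Polynomial.eval_mul, Polynomial.eval_C,
            Polynomial.eval_pow, Polynomial.eval_X, trace_mul_rhoMat_upper_diagonal_lower,
            Finset.mul_sum]
          refine Finset.sum_congr rfl fun n hn => Finset.sum_congr rfl fun m _ => ?_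
          have hpow : t ^ (N - n + 2 * m) = t ^ N * (t ^ (m : ℕ) * t⁻¹ ^ (n - m)) := by
            rw [inv_pow, ← mul_assoc, eq_mul_inv_iff_mul_eq₀ (pow_ne_zero _ ht), ← pow_add,
              ← pow_add]
            have := hs n hn
            have := m.2
            congr 1
            omega
          rw [hpow]
          ring
      _ = 0 := by rw [h, mul_zero]
  have hP : P = 0 := Polynomial.eq_zero_of_infinite_isRoot P <|
    (Set.finite_singleton 0).infinite_compl.mono fun t ht => hroot t ht
  have h0 := congrArg (Polynomial.coeff · 0) hP
  simp only [P, Polynomial.finsetSum_coeff, Polynomial.coeff_C_mul_X_pow,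
    Polynomial.coeff_zero] at h0
  rw [Finset.sum_eq_single N (fun n hn hnN => Finset.sum_eq_zero fun m _ => if_neg (by
    have := hs n hn; omega)) (fun h => absurd hN h), Finset.sum_eq_single 0 (fun m _ hm =>
    if_neg (by have := Fin.pos_of_ne_zero hm; simp only [Fin.lt_def] at this; omega))
    (by simp)] at h0
  simpa using h0

lemma top_eq_zero_of_sum_trace_mul_rhoMat_eq_zero {s : Finset ℕ}
    {E : (n : ℕ) → Matrix (Fin (n+1)) (Fin (n+1)) ℂ} {N : ℕ} (hN : N ∈ s) (hs : ∀ n ∈ s, n ≤ N)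
    (h : ∀ x : SL2, ∑ n ∈ s, trace (E n * rhoMat n x) = 0) : E N = 0 := by
  ext l k
  have hrow : ∀ u : ℂ, ∑ k : Fin (N+1), (E N l k * N.choose k) * u ^ (k : ℕ) = 0 := fun u =>
    congrFun (eq_zero_of_forall_sum_mul_pow_eq_zero _ fun v => by
      rw [← rhoMat_lower_mul_mul_upper_zero_zero,
        corner_eq_zero_of_sum_trace_mul_rhoMat_eq_zero hN hs h]) l
  have hchoose : (N.choose k : ℂ) ≠ 0 :=
    Nat.cast_ne_zero.2 (Nat.choose_pos (Nat.lt_succ_iff.1 k.2)).ne'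
  simpa [hchoose] using congrFun (eq_zero_of_forall_sum_mul_pow_eq_zero _ hrow) k

lemma eq_zero_of_sum_trace_mul_rhoMat_eq_zero (s : Finset ℕ)
    (E : (n : ℕ) → Matrix (Fin (n+1)) (Fin (n+1)) ℂ)
    (h : ∀ x : SL2, ∑ n ∈ s, trace (E n * rhoMat n x) = 0) : ∀ n ∈ s, E n = 0 := by
  induction s using Finset.induction_on_max with
  | empty => simp
  | insert N s hlt ih =>
    have hN : E N = 0 := top_eq_zero_of_sum_trace_mul_rhoMat_eq_zero (Finset.mem_insert_self N s)
      (fun n hn => (Finset.mem_insert.1 hn).elim le_of_eq fun h => (hlt n h).le) h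
    have hs : ∀ x : SL2, ∑ n ∈ s, trace (E n * rhoMat n x) = 0 := fun x => by
      simpa [Finset.sum_insert (fun h => lt_irrefl N (hlt N h)), hN] using h x
    simpa [hN] using ih hs

lemma Upsilon_injective : Function.Injective Upsilon := by
  classical
  suffices ∀ w, Upsilon w = 0 → w = 0 from fun a b hab =>
    sub_eq_zero.1 (this _ (by rw [map_sub, hab, sub_self]))
  intro w hw
  have hsum : ∀ x : SL2, ∑ n ∈ w.support, trace (tensorMatrix n (w n) * rhoMat n x) = 0 := by
    intro x
    simp_rw [← Upsilon_of_apply, ← Finset.sum_apply, ← map_sum, DirectSum.sum_support_of, hw,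
      Pi.zero_apply]
  ext n
  by_cases hn : n ∈ w.support
  · exact tensorMatrix_injective n (by
      rw [eq_zero_of_sum_trace_mul_rhoMat_eq_zero _ _ hsum n hn, DirectSum.zero_apply, map_zero])
  · simpa using hn

def matrixCoeff (n l k : ℕ) : SL2 → ℂ := fun x => rhoFun n x l k

lemma matrixCoeff_eq_sum {n l k : ℕ} (hl : l ≤ n) (hk : k ≤ n) :
    matrixCoeff n l k = ∑ i ∈ range (l+1),
      (k.choose i * (n-k).choose (l-i) : ℂ) • entryMonomial i (l-i) (k-i) (n-k-(l-i)) :=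
  funext fun g => by simp [matrixCoeff, rhoFun_eq_sum g hl hk]

lemma sum_choose_mul_choose {n l k : ℕ} (hk : k ≤ n) :
    ∑ i ∈ range (l+1), (k.choose i * (n-k).choose (l-i) : ℂ) = n.choose l := by
  have h := Nat.add_choose_eq k (n - k) l
  rw [Nat.add_sub_cancel' hk, Finset.Nat.sum_antidiagonal_eq_sum_range_succ_mk] at h
  exact_mod_cast h.symm

lemma entryMonomial_add_one_add_one (p q r s : ℕ) :
    entryMonomial p (q+1) (r+1) s = entryMonomial (p+1) q r (s+1) - entryMonomial p q r s := by
  funext g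
  have hdet : g.1 0 0 * g.1 1 1 - g.1 0 1 * g.1 1 0 = 1 := by
    rw [← det_fin_two]; exact g.2
  simp only [entryMonomial, Pi.sub_apply]
  linear_combination -(g.1 0 0 ^ p * g.1 0 1 ^ q * g.1 1 0 ^ r * g.1 1 1 ^ s) * hdet

lemma entryMonomial_sub_shift_mem {W : Submodule ℂ (SL2 → ℂ)} {D : ℕ}
    (hlow : ∀ p q r s, p + q + r + s < D → entryMonomial p q r s ∈ W) (t : ℕ) :
    ∀ p q r s, p + q + r + s + 2 * t ≤ D →
      entryMonomial p (q+t) (r+t) s - entryMonomial (p+t) q r (s+t) ∈ W := by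
  induction t with
  | zero => simp
  | succ t ih =>
    intro p q r s hD
    have h := W.sub_mem (ih (p+1) q r (s+1) (by omega)) (hlow p (q+t) (r+t) s (by omega))
    rwa [← add_assoc q, ← add_assoc r, entryMonomial_add_one_add_one, sub_right_comm,
      show p + (t + 1) = p + 1 + t by omega, show s + (t + 1) = s + 1 + t by omega]

lemma entryMonomial_mem_of_eq_zero_or_eq_zero {W : Submodule ℂ (SL2 → ℂ)} {D : ℕ}
    (hlow : ∀ p q r s, p + q + r + s < D → entryMonomial p q r s ∈ W)
    (hW : ∀ n l k, l ≤ n → k ≤ n → matrixCoeff n l k ∈ W) {p q r s : ℕ}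
    (hD : p + q + r + s = D) (hqr : q = 0 ∨ r = 0) : entryMonomial p q r s ∈ W := by
  have hterm : ∀ i ∈ range (p + q + 1),
      ((p + r).choose i * (q + s).choose (p + q - i) : ℂ) •
          W.mkQ (entryMonomial i (p + q - i) (p + r - i) (q + s - (p + q - i))) =
        ((p + r).choose i * (q + s).choose (p + q - i) : ℂ) • W.mkQ (entryMonomial p q r s) := by
    intro i hi
    have hi := Nat.lt_succ_iff.1 (Finset.mem_range.1 hi)
    by_cases hshift : i ≤ p ∧ p - i ≤ s
    · congr 1
      rw [Submodule.mkQ_apply, Submodule.mkQ_apply, Submodule.Quotient.eq]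
      have h := entryMonomial_sub_shift_mem hlow (p - i) i q r (s - (p - i)) (by omega)
      rwa [show q + (p - i) = p + q - i by omega, show r + (p - i) = p + r - i by omega,
        show s - (p - i) = q + s - (p + q - i) by omega, show i + (p - i) = p by omega,
        show q + s - (p + q - i) + (p - i) = s by omega] at h
    · have hzero : ((p + r).choose i * (q + s).choose (p + q - i) : ℂ) = 0 := by
        rcases not_and_or.1 hshift with hip | hip
        · simp [Nat.choose_eq_zero_of_lt (show p + r < i by omega)]
        · simp [Nat.choose_eq_zero_of_lt (show q + s < p + q - i by omega)]
      simp [hzero]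
  have hsum : ((p + q + r + s).choose (p + q) : ℂ) • W.mkQ (entryMonomial p q r s) = 0 := by
    have hM := hW (p + q + r + s) (p + q) (p + r) (by omega) (by omega)
    rw [← Submodule.Quotient.mk_eq_zero, ← Submodule.mkQ_apply,
      matrixCoeff_eq_sum (by omega) (by omega), map_sum,
      show p + q + r + s - (p + r) = q + s by omega] at hM
    simp only [map_smul] at hM
    rwa [Finset.sum_congr rfl hterm, ← Finset.sum_smul, ← show p + q + r + s - (p + r) = q + s by
      omega, sum_choose_mul_choose (show p + r ≤ p + q + r + s by omega)] at hM
  rw [smul_eq_zero, Submodule.mkQ_apply, Submodule.Quotient.mk_eq_zero] at hsum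
  exact hsum.resolve_left (Nat.cast_ne_zero.2 (Nat.choose_pos (by omega)).ne')

lemma entryMonomial_mem {W : Submodule ℂ (SL2 → ℂ)}
    (hW : ∀ n l k, l ≤ n → k ≤ n → matrixCoeff n l k ∈ W) (p q r s : ℕ) :
    entryMonomial p q r s ∈ W := by
  induction hD : p + q + r + s using Nat.strong_induction_on generalizing p q r s with
  | _ D ih =>
    have hlow : ∀ p q r s, p + q + r + s < D → entryMonomial p q r s ∈ W :=
      fun p q r s h => ih _ h p q r s rfl
    obtain ⟨q', r', t, rfl, rfl, hqr⟩ : ∃ q' r' t, q = q' + t ∧ r = r' + t ∧ (q' = 0 ∨ r' = 0) :=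
      (le_total q r).elim (fun h => ⟨0, r - q, q, by omega, by omega, Or.inl rfl⟩)
        fun h => ⟨q - r, 0, r, by omega, by omega, Or.inr rfl⟩
    have h := entryMonomial_sub_shift_mem hlow t p q' r' s (by omega)
    exact (W.sub_mem_iff_left (entryMonomial_mem_of_eq_zero_or_eq_zero hlow hW (by omega) hqr)).1 h

def evalEntries : MvPolynomial (Fin 4) ℂ →ₗ[ℂ] (SL2 → ℂ) :=
  LinearMap.pi fun A => (aeval ![A.1 0 0, A.1 0 1, A.1 1 0, A.1 1 1]).toLinearMap

lemma setOf_isRegularFn : {f : SL2 → ℂ | IsRegularFn f} = LinearMap.range evalEntries := by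
  ext f
  simp only [Set.mem_ofPred_eq, IsRegularFn, SetLike.mem_coe, LinearMap.mem_range, funext_iff,
    eq_comm (a := f _)]
  rfl

lemma evalEntries_monomial (d : Fin 4 →₀ ℕ) (c : ℂ) :
    evalEntries (monomial d c) = c • entryMonomial (d 0) (d 1) (d 2) (d 3) := by
  funext A
  simp [evalEntries, entryMonomial, aeval_monomial, Finsupp.prod_fintype, Fin.prod_univ_four]

lemma entryMonomial_mem_range_evalEntries (p q r s : ℕ) :
    entryMonomial p q r s ∈ LinearMap.range evalEntries :=
  ⟨monomial (Finsupp.single 0 p + Finsupp.single 1 q + Finsupp.single 2 r + Finsupp.single 3 s) 1,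
    by simp [evalEntries_monomial]⟩

lemma matrixCoeff_mem_range_Upsilon {n l k : ℕ} (hl : l ≤ n) (hk : k ≤ n) :
    matrixCoeff n l k ∈ LinearMap.range Upsilon := by
  refine ⟨of tensorSummand n (LinearMap.proj (⟨l, Nat.lt_succ_of_le hl⟩ : Fin (n+1)) ⊗ₜ
    Pi.single (⟨k, Nat.lt_succ_of_le hk⟩ : Fin (n+1)) 1), funext fun x => ?_⟩
  simp [Upsilon_of_tmul, matrixCoeff, rhoMat]

lemma Upsilon_of_eq_sum (n : ℕ) (z : tensorSummand n) :
    Upsilon (of tensorSummand n z) =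
      ∑ l : Fin (n+1), ∑ k : Fin (n+1), tensorMatrix n z k l • matrixCoeff n l k := by
  funext x
  simp only [Upsilon_of_apply, trace, diag_apply, mul_apply, Finset.sum_apply, Pi.smul_apply,
    smul_eq_mul, matrixCoeff, rhoMat, of_apply]
  exact Finset.sum_comm

lemma range_Upsilon : LinearMap.range Upsilon = LinearMap.range evalEntries := by
  apply le_antisymm
  · rintro _ ⟨w, rfl⟩
    induction w using DirectSum.induction_on with
    | zero => simp
    | add w w' hw hw' => rw [map_add]; exact add_mem hw hw'
    | of n z =>
      rw [Upsilon_of_eq_sum]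
      refine sum_mem fun l _ => sum_mem fun k _ => Submodule.smul_mem _ _ ?_
      rw [matrixCoeff_eq_sum (Nat.lt_succ_iff.1 l.2) (Nat.lt_succ_iff.1 k.2)]
      exact sum_mem fun i _ => Submodule.smul_mem _ _ (entryMonomial_mem_range_evalEntries ..)
  · rintro _ ⟨P, rfl⟩
    induction P using MvPolynomial.induction_on' with
    | monomial d c =>
      rw [evalEntries_monomial]
      exact Submodule.smul_mem _ _
        (entryMonomial_mem (fun _ _ _ hl hk => matrixCoeff_mem_range_Upsilon hl hk) ..)
    | add P Q hP hQ => rw [map_add]; exact add_mem hP hQ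

/-- `Υ` is a linear bijection onto ℂ[SL(2,ℂ)] (injective with range the regular
functions), and it is SL(2,ℂ)-equivariant:
`Υ((φ∘ρₙ(g)⁻¹) ⊗ ρₙ(g)v)(x) = Υ(φ ⊗ v)(g⁻¹ x g)`. -/
theorem upsilon_bijective_equivariant :
    Function.Injective ⇑Upsilon ∧
    Set.range ⇑Upsilon = {f : SL2 → ℂ | IsRegularFn f} ∧
    ∀ (n : ℕ) (g : SL2) (φ : (Fin (n+1) → ℂ) →ₗ[ℂ] ℂ) (v : Fin (n+1) → ℂ) (x : SL2),
      Upsilon (DirectSum.of (fun m => ((Fin (m+1) → ℂ) →ₗ[ℂ] ℂ) ⊗[ℂ] (Fin (m+1) → ℂ)) n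
          ((φ.comp (Matrix.mulVecLin (rhoMat n g)⁻¹)) ⊗ₜ[ℂ] ((rhoMat n g).mulVec v))) x =
        Upsilon (DirectSum.of (fun m => ((Fin (m+1) → ℂ) →ₗ[ℂ] ℂ) ⊗[ℂ] (Fin (m+1) → ℂ)) n
          (φ ⊗ₜ[ℂ] v)) (g⁻¹ * x * g) := by
  refine ⟨Upsilon_injective, ?_, Upsilon_equivariant⟩
  rw [setOf_isRegularFn, ← range_Upsilon, LinearMap.coe_range]

end
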